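/- Let G be a unipolar graph with clique split H, H_1, …, H_k. Then every induced chordless cycle of G on at least four vertices is contained in H ∪ H_i for some i, and in fact has exactly two vertices in H and exactly two vertices in H_i. -/

import Mathlib

/-- A clique split of a graph `G`: the vertex set is partitioned into a center clique `H`
and peripheral cliques `P 0, …, P (k-1)` with no edges between distinct peripheral cliques. -/
structure IsCliqueSplit {V : Type*} (G : SimpleGraph V) (H : Set V) {k : ℕ}
    (P : Fin k → Set V) : Prop where
  center_clique : G.IsClique H
  periph_clique : ∀ i, G.IsClique (P i)
  center_disj : ∀ i, Disjoint H (P i)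
  periph_disj : ∀ i j, i ≠ j → Disjoint (P i) (P j)
  covers : H ∪ (⋃ i, P i) = Set.univ
  no_cross : ∀ i j, i ≠ j → ∀ u ∈ P i, ∀ v ∈ P j, ¬ G.Adj u v

/-- A graph is unipolar if it admits a clique split. -/
def Unipolar {V : Type*} (G : SimpleGraph V) : Prop :=
  ∃ (H : Set V) (k : ℕ) (P : Fin k → Set V), IsCliqueSplit G H P

/-!
An induced cycle of length at least four is triangle-free, so each clique of the split contains
at most two of its vertices. Adjacent cycle vertices outside the center `H` lie in the same
peripheral clique, hence no three consecutive cycle vertices avoid `H`. If `H` contained at most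
one cycle vertex `a`, then `a + 1, a + 2, a + 3` would avoid `H`; so `H` contains two cycle
vertices, which are adjacent, say `a` and `a + 1`, and no others. If the cycle had length at
least five, `a + 2, a + 3, a + 4` would avoid `H`. So the cycle has length four, and `a + 2`,
`a + 3` lie in a common peripheral clique.
-/

open SimpleGraph Fin.CommRing

namespace Fin

variable {n : ℕ} [NeZero n]

theorem natCast_eq_natCast_iff_of_lt {j k : ℕ} (hj : j < n) (hk : k < n) :
    (j : Fin n) = k ↔ j = k := by
  rw [Fin.ext_iff, val_cast_of_lt hj, val_cast_of_lt hk]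

theorem add_natCast_inj (a : Fin n) {j k : ℕ} (hj : j < n) (hk : k < n) :
    a + j = a + k ↔ j = k := by
  rw [add_right_inj, natCast_eq_natCast_iff_of_lt hj hk]

theorem add_natCast_eq_self_iff (a : Fin n) {j : ℕ} (hj : j < n) : a + j = a ↔ j = 0 := by
  rw [← add_natCast_inj a hj (Nat.pos_of_neZero n), Nat.cast_zero, add_zero]

theorem exists_eq_add_natCast (a x : Fin n) : ∃ j < n, x = a + j :=
  ⟨(x - a).val, (x - a).isLt, by rw [cast_val_eq_self, add_sub_cancel]⟩

end Fin

namespace SimpleGraph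

variable {n : ℕ} [NeZero n]

theorem cycleGraph_adj_iff (hn : 2 ≤ n) {x y : Fin n} :
    (cycleGraph n).Adj x y ↔ y = x + 1 ∨ x = y + 1 := by
  obtain ⟨m, rfl⟩ : ∃ m, n = m + 2 := ⟨n - 2, by omega⟩
  rw [cycleGraph_adj, sub_eq_iff_eq_add', sub_eq_iff_eq_add', or_comm]

theorem cycleGraph_adj_add_one (hn : 2 ≤ n) (x : Fin n) : (cycleGraph n).Adj x (x + 1) :=
  (cycleGraph_adj_iff hn).2 (.inl rfl)

theorem cycleGraph_adj_add_natCast_succ (hn : 2 ≤ n) (a : Fin n) (j : ℕ) :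
    (cycleGraph n).Adj (a + j) (a + (j + 1 : ℕ)) := by
  simpa [add_assoc] using cycleGraph_adj_add_one hn (a + j)

theorem cycleGraph_cliqueFree_three (hn : 4 ≤ n) : (cycleGraph n).CliqueFree 3 := by
  intro s hs
  obtain ⟨x, y, z, hxy, hxz, hyz, rfl⟩ := is3Clique_iff.1 hs
  have h1 : ((1 : ℕ) : Fin n) ≠ (0 : ℕ) := by
    rw [ne_eq, Fin.natCast_eq_natCast_iff_of_lt (by omega) (by omega)]; simp
  have h3 : ((3 : ℕ) : Fin n) ≠ (0 : ℕ) := by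
    rw [ne_eq, Fin.natCast_eq_natCast_iff_of_lt (by omega) (by omega)]; simp
  push_cast at h1 h3
  rw [cycleGraph_adj_iff (by omega)] at hxy hxz hyz
  -- the three `±1` steps around a triangle would sum to `0`, forcing `1 = 0` or `3 = 0`
  rcases hxy with hxy | hxy <;> rcases hxz with hxz | hxz <;> rcases hyz with hyz | hyz <;> grind

namespace Embedding

variable {W V : Type*} {G' : SimpleGraph W} {G : SimpleGraph V} {C : Set V}

theorem eq_or_eq_or_eq_of_mem_isClique (f : G' ↪g G) (hG' : G'.CliqueFree 3)
    (hC : G.IsClique C) {x y z : W} (hx : f x ∈ C) (hy : f y ∈ C) (hz : f z ∈ C) :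
    x = y ∨ x = z ∨ y = z := by
  classical
  by_contra! h
  obtain ⟨hxy, hxz, hyz⟩ := h
  have adj {u v : W} (hu : f u ∈ C) (hv : f v ∈ C) (huv : u ≠ v) : G'.Adj u v :=
    f.map_adj_iff.1 (hC hu hv (f.injective.ne huv))
  exact hG' {x, y, z} (is3Clique_triple_iff.2 ⟨adj hx hy hxy, adj hx hz hxz, adj hy hz hyz⟩)

theorem ncard_range_inter_eq_two [Finite W] (f : G' ↪g G) (hG' : G'.CliqueFree 3)
    (hC : G.IsClique C) {x y : W} (hx : f x ∈ C) (hy : f y ∈ C) (hxy : x ≠ y) :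
    (Set.range f ∩ C).ncard = 2 := by
  refine le_antisymm ?_ ((Set.one_lt_ncard_iff (Set.toFinite _)).2
    ⟨f x, f y, ⟨⟨x, rfl⟩, hx⟩, ⟨⟨y, rfl⟩, hy⟩, f.injective.ne hxy⟩)
  by_contra! h
  obtain ⟨_, _, _, ⟨⟨u, rfl⟩, hu⟩, ⟨⟨v, rfl⟩, hv⟩, ⟨⟨w, rfl⟩, hw⟩, huv, huw, hvw⟩ :=
    (Set.two_lt_ncard_iff (Set.toFinite _)).1 h
  rcases f.eq_or_eq_or_eq_of_mem_isClique hG' hC hu hv hw with rfl | rfl | rfl <;>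
    contradiction

end Embedding

end SimpleGraph

namespace IsCliqueSplit

variable {V : Type*} {G : SimpleGraph V} {H : Set V} {k : ℕ} {P : Fin k → Set V}

theorem exists_mem_periph (hs : IsCliqueSplit G H P) {v : V} (hv : v ∉ H) : ∃ i, v ∈ P i := by
  have hcov : v ∈ H ∪ ⋃ i, P i := hs.covers ▸ Set.mem_univ v
  simpa [hv] using hcov

theorem mem_periph_of_adj (hs : IsCliqueSplit G H P) {u v : V} {i : Fin k} (huv : G.Adj u v)
    (hu : u ∈ P i) (hv : v ∉ H) : v ∈ P i := by
  obtain ⟨j, hj⟩ := hs.exists_mem_periph hv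
  obtain rfl : i = j := by_contra fun hij => hs.no_cross i j hij u hu v hj huv
  exact hj

variable {n : ℕ} [NeZero n] (hs : IsCliqueSplit G H P) (hn : 4 ≤ n)
  (f : cycleGraph n ↪g G)
include hs hn

theorem exists_add_natCast_mem_center (a : Fin n) {m : ℕ} (hm : m + 2 < n) :
    ∃ j, m ≤ j ∧ j ≤ m + 2 ∧ f (a + j) ∈ H := by
  by_contra! hout
  have hadj (j : ℕ) : G.Adj (f (a + j)) (f (a + (j + 1 : ℕ))) :=
    f.map_adj_iff.2 (cycleGraph_adj_add_natCast_succ (by omega) a j)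
  obtain ⟨i, h0⟩ := hs.exists_mem_periph (hout m le_rfl (by omega))
  have h1 := hs.mem_periph_of_adj (hadj m) h0 (hout (m + 1) (by omega) (by omega))
  have h2 := hs.mem_periph_of_adj (hadj (m + 1)) h1 (hout (m + 2) (by omega) le_rfl)
  rcases f.eq_or_eq_or_eq_of_mem_isClique (cycleGraph_cliqueFree_three hn) (hs.periph_clique i)
    h0 h1 h2 with h | h | h <;>
    rw [Fin.add_natCast_inj a (by omega) (by omega)] at h <;> omega

theorem exists_mem_center_and_add_one_mem_center : ∃ a, f a ∈ H ∧ f (a + 1) ∈ H := by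
  by_contra! hno
  obtain ⟨a, ha⟩ : ∃ a, ∀ x, f x ∈ H → x = a := by
    rcases em (∃ a, f a ∈ H) with ⟨a, ha⟩ | hH
    · refine ⟨a, fun x hx => by_contra fun hxa => ?_⟩
      have hadj := f.map_adj_iff.1 (hs.center_clique hx ha (f.injective.ne hxa))
      rcases (cycleGraph_adj_iff (by omega)).1 hadj with rfl | rfl
      · exact hno x hx ha
      · exact hno a ha hx
    · exact ⟨0, fun x hx => absurd ⟨x, hx⟩ hH⟩
  obtain ⟨j, hj1, hj3, hj⟩ := hs.exists_add_natCast_mem_center hn f a (m := 1) (by omega)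
  have := (Fin.add_natCast_eq_self_iff a (by omega)).1 (ha _ hj)
  omega

theorem add_natCast_mem_center_iff {a : Fin n} (ha : f a ∈ H) (ha1 : f (a + 1) ∈ H) {j : ℕ}
    (hj : j < n) : f (a + j) ∈ H ↔ j ≤ 1 := by
  refine ⟨fun hmem => ?_, fun hj1 => ?_⟩
  · rcases f.eq_or_eq_or_eq_of_mem_isClique (cycleGraph_cliqueFree_three hn) hs.center_clique
      ha ha1 hmem with h | h | h
    · exact absurd h (cycleGraph_adj_add_one (by omega) a).ne
    · have := (Fin.add_natCast_eq_self_iff a hj).1 h.symm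
      omega
    · rw [← Nat.cast_one, Fin.add_natCast_inj a (by omega) hj] at h
      omega
  · interval_cases j <;> simpa

theorem cycle_length_eq_four {a : Fin n} (ha : f a ∈ H) (ha1 : f (a + 1) ∈ H) : n = 4 := by
  by_contra hn4
  obtain ⟨j, hj2, hj4, hj⟩ := hs.exists_add_natCast_mem_center hn f a (m := 2) (by omega)
  have := (hs.add_natCast_mem_center_iff hn f ha ha1 (by omega)).1 hj
  omega

end IsCliqueSplit

/-- Let `G` be unipolar with clique split `H, P 0, …, P (k-1)`. Then every induced
chordless cycle of `G` on at least four vertices is contained in `H ∪ P i` for some `i`,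
and in fact has exactly two vertices in `H` and exactly two vertices in `P i`. -/
theorem unipolar_induced_cycle_two_two {V : Type*} (G : SimpleGraph V)
    (H : Set V) {k : ℕ} (P : Fin k → Set V) (hsplit : IsCliqueSplit G H P)
    (n : ℕ) (hn : 4 ≤ n) (f : SimpleGraph.cycleGraph n ↪g G) :
    ∃ i : Fin k, Set.range f ⊆ H ∪ P i ∧
      (Set.range f ∩ H).ncard = 2 ∧ (Set.range f ∩ P i).ncard = 2 := by
  have : NeZero n := ⟨by omega⟩
  obtain ⟨a, ha, ha1⟩ := hsplit.exists_mem_center_and_add_one_mem_center hn f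
  have hcenter : ∀ j < n, f (a + j) ∈ H ↔ j ≤ 1 := fun _ =>
    hsplit.add_natCast_mem_center_iff hn f ha ha1
  obtain rfl := hsplit.cycle_length_eq_four hn f ha ha1
  obtain ⟨i, hi2⟩ := hsplit.exists_mem_periph ((hcenter 2 (by norm_num)).not.2 (by norm_num))
  have hi3 : f (a + (3 : ℕ)) ∈ P i := hsplit.mem_periph_of_adj
    (f.map_adj_iff.2 (cycleGraph_adj_add_natCast_succ (by norm_num) a 2)) hi2
    ((hcenter 3 (by norm_num)).not.2 (by norm_num))
  have hC3 := cycleGraph_cliqueFree_three (le_refl 4)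
  refine ⟨i, ?_, f.ncard_range_inter_eq_two hC3 hsplit.center_clique ha ha1
    (cycleGraph_adj_add_one (by norm_num) a).ne, f.ncard_range_inter_eq_two hC3
    (hsplit.periph_clique i) hi2 hi3 (by rw [ne_eq, Fin.add_natCast_inj a] <;> norm_num)⟩
  rintro _ ⟨x, rfl⟩
  obtain ⟨j, hj, rfl⟩ := Fin.exists_eq_add_natCast a x
  rcases (by omega : j ≤ 1 ∨ j = 2 ∨ j = 3) with h | rfl | rfl
  · exact .inl ((hcenter j hj).2 h)
  · exact .inr hi2
  · exact .inr hi3
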